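/- Each subfiltration step Fil^{r,s}(V_g(O)) is stable under the action of S_0(p). -/

import Mathlib

open MvPolynomial

/-- The right action of an integral 2×2 matrix `γ = [[a,b],[c,d]]` on polynomials in
`X = X 0`, `Y = X 1`: `(P|γ)(X,Y) = P(dX - cY, -bX + aY)`. -/
noncomputable def matAct {R : Type*} [CommRing R] (γ : Matrix (Fin 2) (Fin 2) ℤ)
    (P : MvPolynomial (Fin 2) R) : MvPolynomial (Fin 2) R :=
  MvPolynomial.aeval
    ![γ 1 1 • MvPolynomial.X 0 - γ 1 0 • MvPolynomial.X 1,
      -(γ 0 1 • MvPolynomial.X 0) + γ 0 0 • MvPolynomial.X 1] P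

/-- The semigroup `S_0(p)`. -/
def memS0 (p : ℕ) (γ : Matrix (Fin 2) (Fin 2) ℤ) : Prop :=
  γ.det ≠ 0 ∧ (p : ℤ) ∣ γ 1 0 ∧ ¬ (p : ℤ) ∣ γ 0 0

/-- Membership in `Fil^r(V_g(O)) = { Σ b_j X^j Y^{g-j} : p^{r-j} ∣ b_j for 0 ≤ j ≤ r-1 }`:
the coefficient `b_j` of `X^j Y^{g-j}` is divisible by `p^{r-j}` for `j < r`. -/
def inFil (O : Type*) [CommRing O] (p g r : ℕ) (P : MvPolynomial (Fin 2) O) : Prop :=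
  ∀ j < r, (p : O) ^ (r - j) ∣
    MvPolynomial.coeff (Finsupp.single (0 : Fin 2) j + Finsupp.single (1 : Fin 2) (g - j)) P

/-- Membership in `Fil^{r,s}(V_g(O))`. -/
def inFilRS (O : Type*) [CommRing O] (p g r s : ℕ) (P : MvPolynomial (Fin 2) O) : Prop :=
  inFil O p g r P ∧ ∀ j, r + 1 - s ≤ j → j ≤ r → (p : O) ^ (r - j + 1) ∣
    MvPolynomial.coeff (Finsupp.single (0 : Fin 2) j + Finsupp.single (1 : Fin 2) (g - j)) P

/-! Write `P = Σ b_j X^j Y^{g-j}`. Since `p ∣ c`, the form `dX - cY` lies in the ideal `(p, X)`,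
so `(dX - cY)^j (-bX + aY)^{g-j}` lies in `(p, X)^j`: its coefficient of `X^k Y^{g-k}` is divisible
by `p^(j-k)`. The exponent `e(j)` that `Fil^{r,s}` demands of `b_j` satisfies
`e(k) ≤ e(j) + (j - k)`, so every summand of the `k`-th coefficient of `P|γ` is divisible
by `p^e(k)`. -/

namespace MvPolynomial

variable {σ R : Type*} [CommRing R]

/-- Coefficientwise description of the ideal `(C c, X i)^n`. -/
def coeffDvdPowSubmodule (c : R) (i : σ) (n : ℕ) : Submodule R (MvPolynomial σ R) where
  carrier := {Q | ∀ m, c ^ (n - m i) ∣ coeff m Q}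
  add_mem' hQ hQ' m := by rw [coeff_add]; exact dvd_add (hQ m) (hQ' m)
  zero_mem' m := by rw [coeff_zero]; exact dvd_zero _
  smul_mem' a Q hQ m := by rw [coeff_smul, smul_eq_mul]; exact (hQ m).mul_left a

variable {c : R} {i : σ} {n n' : ℕ} {Q Q' : MvPolynomial σ R}

theorem mem_coeffDvdPowSubmodule_zero (Q : MvPolynomial σ R) : Q ∈ coeffDvdPowSubmodule c i 0 :=
  fun m => by rw [Nat.zero_sub, pow_zero]; exact one_dvd _

theorem X_mem_coeffDvdPowSubmodule_one : X i ∈ coeffDvdPowSubmodule c i 1 := by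
  classical
  intro m
  rw [coeff_X]
  split_ifs with hm
  · simp [← hm]
  · exact dvd_zero _

theorem smul_mem_coeffDvdPowSubmodule_one (Q : MvPolynomial σ R) :
    c • Q ∈ coeffDvdPowSubmodule c i 1 := fun m => by
  rw [coeff_smul, smul_eq_mul]
  exact ((pow_dvd_pow c (Nat.sub_le 1 (m i))).trans (pow_one c).dvd).mul_right _

theorem mul_mem_coeffDvdPowSubmodule (hQ : Q ∈ coeffDvdPowSubmodule c i n)
    (hQ' : Q' ∈ coeffDvdPowSubmodule c i n') : Q * Q' ∈ coeffDvdPowSubmodule c i (n + n') := by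
  classical
  intro m
  rw [coeff_mul]
  refine Finset.dvd_sum fun uv huv => ?_
  have hm : uv.1 i + uv.2 i = m i := by
    rw [← Finsupp.add_apply, Finset.HasAntidiagonal.mem_antidiagonal.mp huv]
  refine (pow_dvd_pow c (by omega : n + n' - m i ≤ (n - uv.1 i) + (n' - uv.2 i))).trans ?_
  rw [pow_add]
  exact mul_dvd_mul (hQ uv.1) (hQ' uv.2)

theorem zsmul_X_sub_zsmul_X_mem_coeffDvdPowSubmodule_one {p : ℕ} {a b : ℤ} (hb : (p : ℤ) ∣ b)
    (j : σ) : (a • X i - b • X j : MvPolynomial σ R) ∈ coeffDvdPowSubmodule (p : R) i 1 := by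
  obtain ⟨t, rfl⟩ := hb
  refine Submodule.sub_mem _ (Submodule.smul_of_tower_mem _ a X_mem_coeffDvdPowSubmodule_one) ?_
  rw [mul_comm, mul_smul, natCast_zsmul, ← Nat.cast_smul_eq_nsmul R]
  exact Submodule.smul_of_tower_mem _ t (smul_mem_coeffDvdPowSubmodule_one _)

theorem pow_mem_coeffDvdPowSubmodule (hQ : Q ∈ coeffDvdPowSubmodule c i n) (k : ℕ) :
    Q ^ k ∈ coeffDvdPowSubmodule c i (n * k) := by
  induction k with
  | zero => exact mem_coeffDvdPowSubmodule_zero _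
  | succ k ih => rw [pow_succ, Nat.mul_succ]; exact mul_mem_coeffDvdPowSubmodule ih hQ

end MvPolynomial

section TwoVariables

variable {O : Type*} [CommRing O]

theorem eq_single_add_single_of_isHomogeneous {g : ℕ} {P : MvPolynomial (Fin 2) O}
    (hP : P.IsHomogeneous g) {m : Fin 2 →₀ ℕ} (hm : m ∈ P.support) :
    m = Finsupp.single 0 (m 0) + Finsupp.single 1 (g - m 0) := by
  have hdeg : m 0 + m 1 = g := by
    simpa [Finsupp.weight_apply, Finsupp.sum_fintype, Fin.sum_univ_two] using
      hP (mem_support_iff.mp hm)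
  ext i
  fin_cases i
  · simp
  · simp; omega

theorem matAct_eq_sum (γ : Matrix (Fin 2) (Fin 2) ℤ) (P : MvPolynomial (Fin 2) O) :
    matAct γ P = ∑ m ∈ P.support, coeff m P •
      ((γ 1 1 • X 0 - γ 1 0 • X 1) ^ m 0 * (-(γ 0 1 • X 0) + γ 0 0 • X 1) ^ m 1) := by
  simp only [matAct, aeval_def, eval₂_eq', Fin.prod_univ_two, Algebra.smul_def]
  rfl

theorem MvPolynomial.IsHomogeneous.matAct (γ : Matrix (Fin 2) (Fin 2) ℤ) {g : ℕ}
    {P : MvPolynomial (Fin 2) O} (hP : P.IsHomogeneous g) : (matAct γ P).IsHomogeneous g := by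
  let H := homogeneousSubmodule (Fin 2) O 1
  have hX (i : Fin 2) : X i ∈ H := isHomogeneous_X O i
  rw [_root_.matAct, ← one_mul g]
  refine hP.aeval _ (Fin.forall_fin_two.mpr ⟨?_, ?_⟩)
  · exact H.sub_mem (H.smul_of_tower_mem _ (hX 0)) (H.smul_of_tower_mem _ (hX 1))
  · exact H.add_mem (H.neg_mem (H.smul_of_tower_mem _ (hX 0))) (H.smul_of_tower_mem _ (hX 1))

end TwoVariables

/-- The exponent of `p` that `Fil^{r,s}` demands of the coefficient of `X^j Y^{g-j}`. -/
def filExp (r s j : ℕ) : ℕ := r - j + if r + 1 - s ≤ j ∧ j ≤ r then 1 else 0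

theorem filExp_le_filExp_add_sub (r s j k : ℕ) : filExp r s k ≤ filExp r s j + (j - k) := by
  unfold filExp
  split_ifs <;> omega

theorem inFilRS_iff {O : Type*} [CommRing O] {p g r s : ℕ} {P : MvPolynomial (Fin 2) O} :
    inFilRS O p g r s P ↔ ∀ j, (p : O) ^ filExp r s j ∣
      coeff (Finsupp.single 0 j + Finsupp.single 1 (g - j)) P := by
  constructor
  · rintro ⟨hfil, hstep⟩ j
    unfold filExp
    split_ifs with hj
    · exact hstep j hj.1 hj.2
    · rcases lt_or_ge j r with hjr | hjr
      · exact hfil j hjr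
      · simp [Nat.sub_eq_zero_of_le hjr]
  · intro h
    refine ⟨fun j hj => (pow_dvd_pow _ ?_).trans (h j),
      fun j hj₁ hj₂ => (pow_dvd_pow _ ?_).trans (h j)⟩ <;>
    · unfold filExp
      split_ifs <;> omega

theorem pow_filExp_dvd_mul_coeff {σ O : Type*} [CommRing O] {p r s j : ℕ} {i : σ} {b : O}
    {Q : MvPolynomial σ O} (hb : (p : O) ^ filExp r s j ∣ b)
    (hQ : Q ∈ coeffDvdPowSubmodule (p : O) i j) (m : σ →₀ ℕ) :
    (p : O) ^ filExp r s (m i) ∣ b * coeff m Q := by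
  refine (pow_dvd_pow _ (filExp_le_filExp_add_sub r s j (m i))).trans ?_
  rw [pow_add]
  exact mul_dvd_mul hb (hQ m)

theorem filRS_stable_general (p g r s : ℕ)
    (O : Type*) [CommRing O]
    (γ : Matrix (Fin 2) (Fin 2) ℤ) (hγ : memS0 p γ)
    (P : MvPolynomial (Fin 2) O) (hP : P.IsHomogeneous g) (hfil : inFilRS O p g r s P) :
    (matAct γ P).IsHomogeneous g ∧ inFilRS O p g r s (matAct γ P) := by
  obtain ⟨-, hc, -⟩ := hγ
  refine ⟨hP.matAct γ, inFilRS_iff.mpr fun k => ?_⟩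
  rw [matAct_eq_sum, coeff_sum]
  refine Finset.dvd_sum fun m hm => ?_
  have hb := inFilRS_iff.mp hfil (m 0)
  rw [← eq_single_add_single_of_isHomogeneous hP hm] at hb
  have hforms : ((γ 1 1 • X 0 - γ 1 0 • X 1) ^ m 0 * (-(γ 0 1 • X 0) + γ 0 0 • X 1) ^ m 1 :
      MvPolynomial (Fin 2) O) ∈ coeffDvdPowSubmodule (p : O) 0 (m 0) := by
    simpa only [one_mul, add_zero] using mul_mem_coeffDvdPowSubmodule
      (pow_mem_coeffDvdPowSubmodule (zsmul_X_sub_zsmul_X_mem_coeffDvdPowSubmodule_one hc 1) (m 0))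
      (mem_coeffDvdPowSubmodule_zero _)
  rw [coeff_smul, smul_eq_mul]
  convert pow_filExp_dvd_mul_coeff hb hforms (Finsupp.single 0 k + Finsupp.single 1 (g - k))
  simp

/-- Each subfiltration step `Fil^{r,s}(V_g(O))` is stable under the action of
`S_0(p)`. -/
theorem filRS_stable (p g r s : ℕ) (hp : p.Prime) (hs : s ≤ r)
    (O : Type*) [CommRing O]
    (γ : Matrix (Fin 2) (Fin 2) ℤ) (hγ : memS0 p γ)
    (P : MvPolynomial (Fin 2) O) (hP : P.IsHomogeneous g) (hfil : inFilRS O p g r s P) :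
    (matAct γ P).IsHomogeneous g ∧ inFilRS O p g r s (matAct γ P) :=
  filRS_stable_general p g r s O γ hγ P hP hfil
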